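/- arXiv:2208.09753 — 2 statements merged into one kernel-verified Lean document; each statement's English description precedes it below -/
import Mathlib

section
/- Let n ≥ 2 and p ≥ n be integers and let I⁺(n,p) = {ξ ∈ ℕ^n : ξ_i ≥ 1, ∑ξ_i ≤ p}. Then ∑_{j=1}^{p-n+1} j · Λ_{I⁺(n,p)}(j) = (p+1)_{n+1}/((n+1)(n-1)!), where Λ_{I⁺(n,p)}(j) counts the total occurrences of j among coordinates of vectors in I⁺(n,p). Equivalently, the degree ∑_{ξ ∈ I⁺(n,p)} |ξ|_1 of the homogeneous determinant polynomial equals (p+1)_{n+1}/((n+1)(n-1)!). -/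
/-!
Both sides of the first equality count the coordinates of all ξ ∈ I⁺(n,p), grouped by their
value. For the closed form, group ξ by its total m: subtracting 1 from every coordinate matches
the positive n-tuples of sum m with the n-tuples of sum m - n, of which there are C(m-1, n-1) by
stars and bars. They contribute m·C(m-1, n-1) = n·C(m, n), and the hockey-stick identity sums
these to n·C(p+1, n+1) = (p+1)_{n+1}/((n+1)(n-1)!).
-/

/-- The set I⁺(n,p) of vectors in ℕ^n with strictly positive coordinates and
coordinate sum at most p. -/
def Iplus (n p : ℕ) : Finset (Fin n → ℕ) :=
  ((Finset.range (p + 1)).biUnion (fun m => Finset.Nat.antidiagonalTuple n m)).filter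
    (fun ξ => ∀ i, 1 ≤ ξ i)

/-- Λ_{I⁺(n,p)}(j): total number of occurrences of j among coordinates of
vectors in I⁺(n,p). -/
def Lam (n p j : ℕ) : ℕ :=
  ∑ ξ ∈ Iplus n p, (Finset.univ.filter (fun i => ξ i = j)).card

open Finset

theorem Finset.Nat.card_antidiagonalTuple (k n : ℕ) :
    #(Nat.antidiagonalTuple k n) = (k + n - 1).choose n := by
  have := card_finsuppAntidiag_nat_eq_choose (s := (univ : Finset (Fin k))) n
  rwa [finsuppAntidiag, card_map, card_attach, piAntidiag_univ_fin_eq_antidiagonalTuple,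
    card_univ, Fintype.card_fin] at this

theorem Finset.sum_eq_sum_mul_card_filter_eq {ι : Type*} {s : Finset ι} {t : Finset ℕ}
    {f : ι → ℕ} (hf : ∀ i ∈ s, f i ∈ t) :
    ∑ i ∈ s, f i = ∑ j ∈ t, j * #{i ∈ s | f i = j} := by
  rw [← sum_fiberwise_of_maps_to hf]
  refine sum_congr rfl fun j _ => ?_
  rw [sum_congr rfl fun i hi => (mem_filter.mp hi).2, sum_const, smul_eq_mul, mul_comm]

theorem Nat.sum_range_choose_eq (p n : ℕ) :
    ∑ m ∈ range (p + 1), m.choose n = (p + 1).choose (n + 1) := by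
  induction p with
  | zero =>
    rcases n with _ | n
    · simp
    · simp [Nat.choose_eq_zero_of_lt (by omega : 1 < n + 2)]
  | succ p ih => rw [sum_range_succ, ih, Nat.choose_succ_succ' (p + 1), add_comm]

theorem Nat.add_mul_choose_eq (n k : ℕ) :
    (k + n) * (n + k - 1).choose k = n * (k + n).choose n := by
  cases n with
  | zero => cases k <;> simp
  | succ n =>
    rw [show n + 1 + k - 1 = n + k by omega, ← Nat.choose_symm_add,
      show k + (n + 1) = n + k + 1 by omega, Nat.add_one_mul_choose_eq, mul_comm]

section PositiveTuples

variable (n : ℕ)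

theorem filter_one_le_antidiagonalTuple_of_lt {m : ℕ} (hm : m < n) :
    {ξ ∈ Nat.antidiagonalTuple n m | ∀ i, 1 ≤ ξ i} = ∅ := by
  refine filter_eq_empty_iff.mpr fun ξ hξ hpos => ?_
  rw [Nat.mem_antidiagonalTuple] at hξ
  have : n ≤ ∑ i, ξ i := by simpa using card_nsmul_le_sum univ ξ 1 fun i _ => hpos i
  omega

theorem card_filter_one_le_antidiagonalTuple_add (k : ℕ) :
    #{ξ ∈ Nat.antidiagonalTuple n (k + n) | ∀ i, 1 ≤ ξ i} = #(Nat.antidiagonalTuple n k) := by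
  refine card_nbij' (fun ξ i => ξ i - 1) (fun η i => η i + 1) ?_ ?_ ?_ ?_
  · intro ξ hξ
    simp only [coe_filter, Nat.mem_antidiagonalTuple, Set.mem_ofPred_eq] at hξ
    have hshift : ∑ i, ξ i = ∑ i, (ξ i - 1) + n := by
      simp [← sum_congr rfl fun i _ => Nat.sub_add_cancel (hξ.2 i), sum_add_distrib]
    simp only [Nat.mem_antidiagonalTuple, mem_coe]
    omega
  · intro η hη
    simp only [mem_coe, Nat.mem_antidiagonalTuple] at hη
    simp [Nat.mem_antidiagonalTuple, sum_add_distrib, hη]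
  · intro ξ hξ
    simp only [coe_filter, Set.mem_ofPred_eq] at hξ
    funext i
    exact Nat.sub_add_cancel (hξ.2 i)
  · intro η _
    simp

theorem sum_filter_one_le_antidiagonalTuple (m : ℕ) :
    ∑ ξ ∈ Nat.antidiagonalTuple n m with ∀ i, 1 ≤ ξ i, ∑ i, ξ i = n * m.choose n := by
  rcases lt_or_ge m n with hm | hm
  · simp [filter_one_le_antidiagonalTuple_of_lt n hm, Nat.choose_eq_zero_of_lt hm]
  obtain ⟨k, rfl⟩ := Nat.exists_eq_add_of_le' hm
  rw [sum_congr rfl fun ξ hξ => Nat.mem_antidiagonalTuple.mp (mem_filter.mp hξ).1, sum_const,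
    card_filter_one_le_antidiagonalTuple_add, Nat.card_antidiagonalTuple, smul_eq_mul, mul_comm,
    Nat.add_mul_choose_eq]

end PositiveTuples

theorem mem_Iplus {n p : ℕ} {ξ : Fin n → ℕ} : ξ ∈ Iplus n p ↔ ∑ i, ξ i ≤ p ∧ ∀ i, 1 ≤ ξ i := by
  simp [Iplus, Nat.mem_antidiagonalTuple]

theorem mem_Icc_of_mem_Iplus {n p : ℕ} {ξ : Fin n → ℕ} (hξ : ξ ∈ Iplus n p) (i : Fin n) :
    ξ i ∈ Icc 1 (p - n + 1) := by
  obtain ⟨hsum, hpos⟩ := mem_Iplus.mp hξ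
  have hrest : n - 1 ≤ ∑ k ∈ univ.erase i, ξ k := by
    simpa using card_nsmul_le_sum (univ.erase i) ξ 1 fun k _ => hpos k
  have hsplit := add_sum_erase univ ξ (mem_univ i)
  exact mem_Icc.mpr ⟨hpos i, by omega⟩

theorem sum_Iplus_eq_sum_mul_Lam (n p : ℕ) :
    ∑ ξ ∈ Iplus n p, ∑ i, ξ i = ∑ j ∈ Icc 1 (p - n + 1), j * Lam n p j := by
  calc ∑ ξ ∈ Iplus n p, ∑ i, ξ i
      = ∑ ξ ∈ Iplus n p, ∑ j ∈ Icc 1 (p - n + 1), j * #{i | ξ i = j} :=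
        sum_congr rfl fun ξ hξ =>
          sum_eq_sum_mul_card_filter_eq fun i _ => mem_Icc_of_mem_Iplus hξ i
    _ = ∑ j ∈ Icc 1 (p - n + 1), j * Lam n p j := by
        simp only [Lam, mul_sum]
        exact sum_comm

theorem sum_Iplus (n p : ℕ) : ∑ ξ ∈ Iplus n p, ∑ i, ξ i = n * (p + 1).choose (n + 1) := by
  rw [Iplus, filter_biUnion, sum_biUnion]
  · simp only [sum_filter_one_le_antidiagonalTuple, ← mul_sum, Nat.sum_range_choose_eq]
  · intro a _ b _ hab
    refine disjoint_filter_filter (disjoint_left.mpr fun ξ ha hb => hab ?_)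
    rw [Nat.mem_antidiagonalTuple] at ha hb
    rw [← ha, ← hb]

theorem Nat.cast_mul_choose_eq_descFactorial_div {n : ℕ} (hn : 1 ≤ n) (m : ℕ) :
    ((n * m.choose (n + 1) : ℕ) : ℚ) = m.descFactorial (n + 1) / ((n + 1) * (n - 1).factorial) := by
  obtain ⟨n, rfl⟩ := Nat.exists_eq_add_of_le' hn
  rw [Nat.descFactorial_eq_factorial_mul_choose, Nat.add_sub_cancel, Nat.factorial_succ,
    Nat.factorial_succ]
  push_cast
  field_simp

theorem degree_identity_general (n p : ℕ) (hn : 2 ≤ n) :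
    (∑ ξ ∈ Iplus n p, (∑ i, ξ i) : ℚ) =
        (∑ j ∈ Finset.Icc 1 (p - n + 1), (j : ℚ) * (Lam n p j : ℚ)) ∧
    (∑ j ∈ Finset.Icc 1 (p - n + 1), (j : ℚ) * (Lam n p j : ℚ)) =
        ((p + 1).descFactorial (n + 1) : ℚ) / ((n + 1) * (n - 1).factorial) := by
  have hLam : ∑ ξ ∈ Iplus n p, ∑ i, ξ i = ∑ j ∈ Icc 1 (p - n + 1), j * Lam n p j :=
    sum_Iplus_eq_sum_mul_Lam n p
  refine ⟨mod_cast hLam, ?_⟩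
  rw [← Nat.cast_mul_choose_eq_descFactorial_div (by omega), ← sum_Iplus, hLam]
  push_cast
  rfl

/-- The degree of the determinant polynomial: ∑_{ξ∈I⁺(n,p)} |ξ|₁
= ∑_{j=1}^{p-n+1} j·Λ_{I⁺(n,p)}(j) = (p+1)_{n+1}/((n+1)(n-1)!). -/
theorem degree_identity (n p : ℕ) (hn : 2 ≤ n) (hp : n ≤ p) :
    (∑ ξ ∈ Iplus n p, (∑ i, ξ i) : ℚ) =
        (∑ j ∈ Finset.Icc 1 (p - n + 1), (j : ℚ) * (Lam n p j : ℚ)) ∧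
    (∑ j ∈ Finset.Icc 1 (p - n + 1), (j : ℚ) * (Lam n p j : ℚ)) =
        ((p + 1).descFactorial (n + 1) : ℚ) / ((n + 1) * (n - 1).factorial) :=
  degree_identity_general n p hn
end

section
/- Let n, p ∈ ℕ and κ = 0. The coefficient matrix K indexed by I(n,p) = {ξ ∈ ℕ₀^n : |ξ|_1 ≤ p} with entries K_{ij} = 2^{n - #\{l : η_{j,l} = 0\}} · ∏_{l=1}^n η_{j,l}^{2ξ_{i,l}} (with the convention 0^0 = 1) is nonsingular. -/
/-- The set I(n,p) of multi-indices ξ ∈ ℕ₀^n with coordinate sum at most p. -/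
def Inp (n p : ℕ) : Finset (Fin n → ℕ) :=
  (Finset.range (p + 1)).biUnion (fun m => Finset.Nat.antidiagonalTuple n m)

/-!
Since 2^{n - z(η)} only rescales columns, K is nonsingular iff the matrix (∏_l (η_l²)^{ξ_l})_{ξ,η}
is, i.e. iff a polynomial of total degree ≤ p vanishing at the points (η_1², …, η_n²), |η| ≤ p,
must be zero. This unisolvence holds for any grid (t_1(η_1), …, t_n(η_n)) with injective t_l,
by induction on n and p: restricted to the hyperplane x_1 = t_1(0), P vanishes on the grid one
dimension lower, so P = (x_1 - t_1(0)) Q, and Q has degree ≤ p - 1 and vanishes on the grid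
with t_1 shifted by one.
-/

open MvPolynomial

namespace MvPolynomial

variable {R : Type*} [CommRing R] {n : ℕ}

theorem eval_eval_C_finSuccEquiv (P : MvPolynomial (Fin (n + 1)) R) (a : R) (s : Fin n → R) :
    eval s (Polynomial.eval (C a) (finSuccEquiv R n P)) = eval (Fin.cons a s) P := by
  rw [eval_eq_eval_mv_eval', Polynomial.eval_map, ← Polynomial.eval₂_at_apply, eval_C]

theorem totalDegree_eval_C_finSuccEquiv_le (P : MvPolynomial (Fin (n + 1)) R) (a : R) :
    (Polynomial.eval (C a) (finSuccEquiv R n P)).totalDegree ≤ P.totalDegree := by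
  rw [Polynomial.eval_eq_sum_range]
  refine (totalDegree_finsetSum _ _).trans (Finset.sup_le fun j _ => ?_)
  refine (totalDegree_mul _ _).trans ?_
  rw [← C_pow, totalDegree_C, add_zero]
  by_cases hj : (finSuccEquiv R n P).coeff j = 0
  · simp [hj]
  · exact (Nat.le_add_right _ j).trans (totalDegree_coeff_finSuccEquiv_add_le P j hj)

theorem exists_eq_X_zero_sub_C_mul {P : MvPolynomial (Fin (n + 1)) R} {a : R}
    (h : Polynomial.eval (C a) (finSuccEquiv R n P) = 0) : ∃ Q, P = (X 0 - C a) * Q := by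
  obtain ⟨q, hq⟩ := Polynomial.dvd_iff_isRoot.mpr h
  refine ⟨(finSuccEquiv R n).symm q, (finSuccEquiv R n).injective ?_⟩
  rw [hq, map_mul, map_sub, AlgEquiv.apply_symm_apply, finSuccEquiv_X_zero]
  simp [finSuccEquiv_apply]

theorem totalDegree_X_sub_C [Nontrivial R] {σ : Type*} (i : σ) (a : R) :
    (X i - C a).totalDegree = 1 := by
  refine le_antisymm ((totalDegree_sub_C_le _ _).trans_eq (totalDegree_X i)) ?_
  have := totalDegree_add (X i - C a) (C a)
  rw [sub_add_cancel, totalDegree_X, totalDegree_C] at this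
  omega

theorem totalDegree_X_sub_C_mul [IsDomain R] {σ : Type*} (i : σ) (a : R)
    {Q : MvPolynomial σ R} (hQ : Q ≠ 0) : ((X i - C a) * Q).totalDegree = Q.totalDegree + 1 := by
  have hX : X i - C a ≠ 0 := fun h => by simpa [h] using totalDegree_X_sub_C i a
  rw [totalDegree_mul_of_isDomain hX hQ, totalDegree_X_sub_C, add_comm]

theorem eq_zero_of_forall_eval_simplex_eq_zero [IsDomain R] {p : ℕ} {t : Fin n → ℕ → R}
    (ht : ∀ l, (t l).Injective) {P : MvPolynomial (Fin n) R} (hdeg : P.totalDegree ≤ p)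
    (hP : ∀ η : Fin n → ℕ, ∑ l, η l ≤ p → eval (fun l => t l (η l)) P = 0) : P = 0 := by
  induction n generalizing p with
  | zero =>
    rw [eq_C_of_isEmpty P] at hP ⊢
    simpa using hP 0 (by simp)
  | succ n ihn =>
    induction p generalizing t P with
    | zero =>
      rw [totalDegree_eq_zero_iff_eq_C.mp (Nat.le_zero.mp hdeg)] at hP ⊢
      simpa using hP 0 (by simp)
    | succ p ihp =>
      have hP₀ : Polynomial.eval (C (t 0 0)) (finSuccEquiv R n P) = 0 := by
        refine ihn (fun l => ht l.succ) ((totalDegree_eval_C_finSuccEquiv_le _ _).trans hdeg)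
          fun η hη => ?_
        have hpt : (Fin.cons (t 0 0) fun l => t l.succ (η l) : Fin (n + 1) → R) =
            fun l => t l ((Fin.cons 0 η : Fin (n + 1) → ℕ) l) := by
          funext l
          cases l using Fin.cases <;> simp
        rw [eval_eval_C_finSuccEquiv, hpt]
        exact hP _ (by simpa [Fin.sum_cons] using hη)
      obtain ⟨Q, rfl⟩ := exists_eq_X_zero_sub_C_mul hP₀
      suffices Q = 0 by rw [this, mul_zero]
      have hQdeg : Q.totalDegree ≤ p := by
        by_cases hQ : Q = 0
        · simp [hQ]
        · have := totalDegree_X_sub_C_mul (0 : Fin (n + 1)) (t 0 0) hQ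
          omega
      refine ihp (t := Function.update t 0 (t 0 ∘ Nat.succ)) (fun l => ?_) hQdeg fun η hη => ?_
      · rcases eq_or_ne l 0 with rfl | hl
        · simpa using (ht 0).comp Nat.succ_injective
        · simpa [hl] using ht l
      · have hpt : (fun l => Function.update t 0 (t 0 ∘ Nat.succ) l (η l)) =
            fun l => t l ((η + Pi.single 0 1 : Fin (n + 1) → ℕ) l) := by
          funext l
          rcases eq_or_ne l 0 with rfl | hl <;> simp [*]
        have := hP (η + Pi.single 0 1) (by simp [Finset.sum_add_distrib]; omega)
        rw [← hpt, eval_mul] at this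
        simpa [sub_eq_zero, (ht 0).ne (Nat.succ_ne_zero _)] using this

end MvPolynomial

theorem mem_Inp_iff {n p : ℕ} {η : Fin n → ℕ} : η ∈ Inp n p ↔ ∑ l, η l ≤ p := by
  simp [Inp, Finset.Nat.mem_antidiagonalTuple, eq_comm]

def simplexVandermonde {R : Type*} [CommRing R] {n : ℕ} (t : Fin n → ℕ → R) (p : ℕ) :
    Matrix (Inp n p) (Inp n p) R :=
  Matrix.of fun ξ η => ∏ l, t l (η.1 l) ^ ξ.1 l

theorem det_simplexVandermonde_ne_zero {K : Type*} [Field K] {n : ℕ} {t : Fin n → ℕ → K}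
    (ht : ∀ l, (t l).Injective) (p : ℕ) : (simplexVandermonde t p).det ≠ 0 := by
  intro hdet
  obtain ⟨v, hv, hvM⟩ := Matrix.exists_vecMul_eq_zero_iff.mpr hdet
  let e : Inp n p → (Fin n →₀ ℕ) := fun ξ => Finsupp.equivFunOnFinite.symm ξ.1
  have he : e.Injective := fun ξ ζ h => Subtype.ext (Finsupp.equivFunOnFinite.symm.injective h)
  let P : MvPolynomial (Fin n) K := ∑ ξ, monomial (e ξ) (v ξ)
  have hdeg : P.totalDegree ≤ p := totalDegree_finsetSum_le fun ξ _ =>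
    (totalDegree_monomial_le _ _).trans (by simpa [e, Finsupp.sum_fintype] using mem_Inp_iff.mp ξ.2)
  have hP : P = 0 := eq_zero_of_forall_eval_simplex_eq_zero ht hdeg fun η hη => by
    simpa [P, e, simplexVandermonde, Matrix.vecMul, dotProduct, eval_monomial,
      Finsupp.prod_fintype] using congrFun hvM ⟨η, mem_Inp_iff.mpr hη⟩
  refine hv (funext fun ξ => ?_)
  have := congrArg (coeff (e ξ)) hP
  rwa [coeff_sum, Finset.sum_eq_single ξ (fun ζ _ hζ => by simp [coeff_monomial, he.ne hζ])
    (by simp), coeff_monomial, if_pos rfl] at this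

theorem K_nonsingular_general (n p : ℕ) :
    Matrix.det (fun ξ η : ↥(Inp n p) =>
      (2 : ℚ) ^ (n - (Finset.univ.filter (fun l => (η : Fin n → ℕ) l = 0)).card) *
        ∏ l, ((η : Fin n → ℕ) l : ℚ) ^ (2 * (ξ : Fin n → ℕ) l)) ≠ 0 := by
  let d : Inp n p → ℚ := fun η => 2 ^ (n - (Finset.univ.filter (fun l => η.1 l = 0)).card)
  have hsq : (fun k : ℕ => (k : ℚ) ^ 2).Injective := fun a b h =>
    Nat.pow_left_injective two_ne_zero (by exact_mod_cast (show (a : ℚ) ^ 2 = b ^ 2 from h))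
  have hK : simplexVandermonde (fun _ k => (k : ℚ) ^ 2) p * Matrix.diagonal d =
      Matrix.of fun ξ η => d η * ∏ l, (η.1 l : ℚ) ^ (2 * ξ.1 l) := by
    ext ξ η
    simp [simplexVandermonde, Matrix.mul_diagonal, pow_mul, mul_comm]
  have hdet : (simplexVandermonde (fun _ k => (k : ℚ) ^ 2) p * Matrix.diagonal d).det ≠ 0 := by
    rw [Matrix.det_mul, Matrix.det_diagonal]
    exact mul_ne_zero (det_simplexVandermonde_ne_zero (fun _ => hsq) p) (by positivity)
  rwa [hK] at hdet

/-- The coefficient matrix K for κ = 0, with entries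
K_{ξη} = 2^{n - #{l : η_l = 0}} · ∏_l η_l^{2ξ_l} (0^0 = 1), is nonsingular. -/
theorem K_nonsingular (n p : ℕ) (hn : 1 ≤ n) (hp : 1 ≤ p) :
    Matrix.det (fun ξ η : ↥(Inp n p) =>
      (2 : ℚ) ^ (n - (Finset.univ.filter (fun l => (η : Fin n → ℕ) l = 0)).card) *
        ∏ l, ((η : Fin n → ℕ) l : ℚ) ^ (2 * (ξ : Fin n → ℕ) l)) ≠ 0 :=
  K_nonsingular_general n p
end
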